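/- The AT iterative algorithm is almost R-stable for weak contractions: if {r_m} is any sequence in P and γ_m = ‖r_{m+1} − g(R, r_m)‖ where g(R, r) denotes one step of the AT iteration starting from r, then ∑ γ_m < ∞ implies r_m → s, the fixed point of R. -/

import Mathlib

/-!
Since `R s = s`, the weak-contraction inequality with `p = s` reads `‖R q - s‖ ≤ ζ ‖q - s‖`, so
each application of `R` contracts the distance to `s` by `ζ`, while the Mann averages
`(1 - a) q + a R q` do not increase it. One AT step applies `R` three times along every branch,
hence `‖g(R, r) - s‖ ≤ ζ³ ‖r - s‖` and `x_m = ‖r_m - s‖` satisfies `x_{m+1} ≤ ζ³ x_m + γ_m`.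
Summing this recursion bounds the partial sums of `x` by `(x_0 + ∑ γ) / (1 - ζ³)`, so `x` is
summable and in particular tends to `0`.
-/

lemma summable_of_le_mul_add_summable {c : ℝ} (hc : c < 1) {x γ : ℕ → ℝ}
    (hx : ∀ n, 0 ≤ x n) (hγ : ∀ n, 0 ≤ γ n) (hγs : Summable γ)
    (hrec : ∀ n, x (n + 1) ≤ c * x n + γ n) : Summable x := by
  refine summable_of_sum_range_le hx (c := (x 0 + ∑' n, γ n) / (1 - c)) fun N => ?_
  have hshift : ∑ n ∈ Finset.range N, x (n + 1) ≤ c * ∑ n ∈ Finset.range N, x n + ∑' n, γ n :=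
    calc ∑ n ∈ Finset.range N, x (n + 1)
        ≤ ∑ n ∈ Finset.range N, (c * x n + γ n) := Finset.sum_le_sum fun n _ => hrec n
      _ ≤ c * ∑ n ∈ Finset.range N, x n + ∑' n, γ n := by
        rw [Finset.sum_add_distrib, ← Finset.mul_sum]
        gcongr
        exact hγs.sum_le_tsum _ fun n _ => hγ n
  have hmono : ∑ n ∈ Finset.range N, x n ≤ ∑ n ∈ Finset.range (N + 1), x n :=
    Finset.sum_le_sum_of_subset_of_nonneg (Finset.range_subset_range.2 N.le_succ)
      fun n _ _ => hx n
  rw [Finset.sum_range_succ'] at hmono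
  rw [le_div_iff₀ (sub_pos.2 hc)]
  linarith

noncomputable section ATIteration

variable {Q : Type*} [NormedAddCommGroup Q] {P : Set Q} {R : Q → Q} {s : Q} {ζ t : ℝ}

lemma norm_sub_fixedPoint_le_of_weakContraction {L : ℝ}
    (hweak : ∀ p q, p ∈ P → q ∈ P → ‖R p - R q‖ ≤ ζ * ‖p - q‖ + L * ‖p - R p‖)
    (hsP : s ∈ P) (hfix : R s = s) {q : Q} (hq : q ∈ P) :
    ‖R q - s‖ ≤ ζ * ‖q - s‖ := by
  simpa [hfix, norm_sub_rev] using hweak s q hsP hq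

lemma norm_apply_apply_sub_le (hR : ∀ q ∈ P, ‖R q - s‖ ≤ ζ * ‖q - s‖) (hmap : Set.MapsTo R P P)
    (hζ0 : 0 ≤ ζ) {q : Q} (hq : q ∈ P) :
    ‖R (R q) - s‖ ≤ ζ ^ 2 * ‖q - s‖ :=
  calc ‖R (R q) - s‖ ≤ ζ * ‖R q - s‖ := hR _ (hmap hq)
    _ ≤ ζ * (ζ * ‖q - s‖) := mul_le_mul_of_nonneg_left (hR q hq) hζ0
    _ = ζ ^ 2 * ‖q - s‖ := by ring

variable [NormedSpace ℝ Q]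

def mannStep (R : Q → Q) (t : ℝ) (q : Q) : Q := (1 - t) • q + t • R q

/-- The point `b` of one AT step. -/
def atMidpoint (R : Q → Q) (t : ℝ) (r : Q) : Q :=
  (1/2 : ℝ) • R (R r) + (1/2 : ℝ) • R (R (mannStep R t r))

/-- One step `g(R, r)` of the AT iteration with parameter `t`. -/
def atStep (R : Q → Q) (t : ℝ) (r : Q) : Q := R (mannStep R t (atMidpoint R t r))

lemma norm_convexComb_sub_le {t : ℝ} (ht0 : 0 ≤ t) (ht1 : t ≤ 1) (u v s : Q) :
    ‖(1 - t) • u + t • v - s‖ ≤ (1 - t) * ‖u - s‖ + t * ‖v - s‖ := by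
  have h : (1 - t) • u + t • v - s = (1 - t) • (u - s) + t • (v - s) := by module
  rw [h]
  refine (norm_add_le _ _).trans_eq ?_
  rw [norm_smul, norm_smul, Real.norm_of_nonneg (sub_nonneg.2 ht1), Real.norm_of_nonneg ht0]

lemma mannStep_mem (hPconv : Convex ℝ P) (hmap : Set.MapsTo R P P) (ht0 : 0 ≤ t) (ht1 : t ≤ 1)
    {q : Q} (hq : q ∈ P) : mannStep R t q ∈ P :=
  hPconv hq (hmap hq) (sub_nonneg.2 ht1) ht0 (sub_add_cancel 1 t)

lemma atMidpoint_mem (hPconv : Convex ℝ P) (hmap : Set.MapsTo R P P) (ht0 : 0 ≤ t) (ht1 : t ≤ 1)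
    {r : Q} (hr : r ∈ P) : atMidpoint R t r ∈ P :=
  hPconv (hmap (hmap hr)) (hmap (hmap (mannStep_mem hPconv hmap ht0 ht1 hr)))
    (by norm_num) (by norm_num) (by norm_num)

lemma norm_mannStep_sub_le (hR : ∀ q ∈ P, ‖R q - s‖ ≤ ζ * ‖q - s‖) (hζ1 : ζ ≤ 1)
    (ht0 : 0 ≤ t) (ht1 : t ≤ 1) {q : Q} (hq : q ∈ P) :
    ‖mannStep R t q - s‖ ≤ ‖q - s‖ := by
  have hRq : t * ‖R q - s‖ ≤ t * ‖q - s‖ :=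
    mul_le_mul_of_nonneg_left ((hR q hq).trans (mul_le_of_le_one_left (norm_nonneg _) hζ1)) ht0
  unfold mannStep
  linarith [norm_convexComb_sub_le ht0 ht1 q (R q) s]

lemma norm_atMidpoint_sub_le (hR : ∀ q ∈ P, ‖R q - s‖ ≤ ζ * ‖q - s‖) (hPconv : Convex ℝ P)
    (hmap : Set.MapsTo R P P) (hζ0 : 0 ≤ ζ) (hζ1 : ζ ≤ 1) (ht0 : 0 ≤ t) (ht1 : t ≤ 1)
    {r : Q} (hr : r ∈ P) :
    ‖atMidpoint R t r - s‖ ≤ ζ ^ 2 * ‖r - s‖ := by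
  have hmann := mannStep_mem hPconv hmap ht0 ht1 hr
  have h₁ := norm_apply_apply_sub_le hR hmap hζ0 hr
  have h₂ := (norm_apply_apply_sub_le hR hmap hζ0 hmann).trans
    (mul_le_mul_of_nonneg_left (norm_mannStep_sub_le hR hζ1 ht0 ht1 hr) (by positivity))
  have h := norm_convexComb_sub_le (t := 1/2) (by norm_num) (by norm_num)
    (R (R r)) (R (R (mannStep R t r))) s
  rw [show (1 : ℝ) - 1/2 = 1/2 by norm_num] at h
  unfold atMidpoint
  linarith

lemma norm_atStep_sub_le (hR : ∀ q ∈ P, ‖R q - s‖ ≤ ζ * ‖q - s‖) (hPconv : Convex ℝ P)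
    (hmap : Set.MapsTo R P P) (hζ0 : 0 ≤ ζ) (hζ1 : ζ ≤ 1) (ht0 : 0 ≤ t) (ht1 : t ≤ 1)
    {r : Q} (hr : r ∈ P) :
    ‖atStep R t r - s‖ ≤ ζ ^ 3 * ‖r - s‖ := by
  have hb := atMidpoint_mem hPconv hmap ht0 ht1 hr
  calc ‖atStep R t r - s‖ ≤ ζ * ‖mannStep R t (atMidpoint R t r) - s‖ :=
        hR _ (mannStep_mem hPconv hmap ht0 ht1 hb)
    _ ≤ ζ * ‖atMidpoint R t r - s‖ :=
        mul_le_mul_of_nonneg_left (norm_mannStep_sub_le hR hζ1 ht0 ht1 hb) hζ0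
    _ ≤ ζ * (ζ ^ 2 * ‖r - s‖) :=
        mul_le_mul_of_nonneg_left (norm_atMidpoint_sub_le hR hPconv hmap hζ0 hζ1 ht0 ht1 hr) hζ0
    _ = ζ ^ 3 * ‖r - s‖ := by ring

end ATIteration

theorem AT_iteration_almost_stable_general
    {Q : Type*} [NormedAddCommGroup Q] [NormedSpace ℝ Q]
    (P : Set Q) (hPconv : Convex ℝ P)
    (R : Q → Q) (hmap : Set.MapsTo R P P)
    (ζ L : ℝ) (hζ0 : 0 < ζ) (hζ1 : ζ < 1)
    (hweak : ∀ p q, p ∈ P → q ∈ P → ‖R p - R q‖ ≤ ζ * ‖p - q‖ + L * ‖p - R p‖)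
    (s : Q) (hsP : s ∈ P) (hfix : R s = s)
    (a : ℕ → ℝ) (ha : ∀ m, a m ∈ Set.Ioo (0 : ℝ) 1)
    (r b g : ℕ → Q) (hr : ∀ m, r m ∈ P)
    (hb : ∀ m, b m = (1/2 : ℝ) • R (R (r m)) +
      (1/2 : ℝ) • R (R ((1 - a m) • r m + (a m) • R (r m))))
    (hg : ∀ m, g m = R ((1 - a m) • b m + (a m) • R (b m)))
    (γ : ℕ → ℝ) (hγ : ∀ m, γ m = ‖r (m + 1) - g m‖)
    (hsum : Summable γ) :
    Filter.Tendsto r Filter.atTop (nhds s) := by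
  have hR : ∀ q ∈ P, ‖R q - s‖ ≤ ζ * ‖q - s‖ := fun q hq =>
    norm_sub_fixedPoint_le_of_weakContraction hweak hsP hfix hq
  have hg_step : ∀ m, g m = atStep R (a m) (r m) := fun m => by rw [hg, hb]; rfl
  have hrec : ∀ m, ‖r (m + 1) - s‖ ≤ ζ ^ 3 * ‖r m - s‖ + γ m := fun m => by
    have hstep := norm_atStep_sub_le hR hPconv hmap hζ0.le hζ1.le (ha m).1.le (ha m).2.le (hr m)
    rw [← hg_step] at hstep
    linarith [norm_sub_le_norm_sub_add_norm_sub (r (m + 1)) (g m) s, hγ m]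
  have hsummable : Summable fun m => ‖r m - s‖ :=
    summable_of_le_mul_add_summable (pow_lt_one₀ hζ0.le hζ1 three_ne_zero)
      (fun m => norm_nonneg _) (fun m => (hγ m).symm ▸ norm_nonneg _) hsum hrec
  exact tendsto_iff_norm_sub_tendsto_zero.2 hsummable.tendsto_atTop_zero

theorem AT_iteration_almost_stable
    {Q : Type*} [NormedAddCommGroup Q] [NormedSpace ℝ Q] [CompleteSpace Q]
    (P : Set Q) (hP : P.Nonempty) (hPc : IsClosed P) (hPconv : Convex ℝ P)
    (R : Q → Q) (hmap : Set.MapsTo R P P)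
    (ζ L : ℝ) (hζ0 : 0 < ζ) (hζ1 : ζ < 1) (hL : 0 ≤ L)
    (hweak : ∀ p q, p ∈ P → q ∈ P → ‖R p - R q‖ ≤ ζ * ‖p - q‖ + L * ‖p - R p‖)
    (s : Q) (hsP : s ∈ P) (hfix : R s = s)
    (a : ℕ → ℝ) (ha : ∀ m, a m ∈ Set.Ioo (0 : ℝ) 1)
    (r b g : ℕ → Q) (hr : ∀ m, r m ∈ P)
    (hb : ∀ m, b m = (1/2 : ℝ) • R (R (r m)) +
      (1/2 : ℝ) • R (R ((1 - a m) • r m + (a m) • R (r m))))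
    (hg : ∀ m, g m = R ((1 - a m) • b m + (a m) • R (b m)))
    (γ : ℕ → ℝ) (hγ : ∀ m, γ m = ‖r (m + 1) - g m‖)
    (hsum : Summable γ) :
    Filter.Tendsto r Filter.atTop (nhds s) :=
  AT_iteration_almost_stable_general P hPconv R hmap ζ L hζ0 hζ1 hweak s hsP hfix a ha r b g hr hb
    hg γ hγ hsum
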